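/- arXiv:1609.03654 — 10 statements merged into one kernel-verified Lean document; each statement's English description precedes it below -/
import Mathlib

section
/- Let c : ℕ → ℕ → ℂ take nonzero values on positive arguments and satisfy the associativity constraint c(k,l)·c(k+l,m) = c(k,l+m)·c(l,m) for all positive integers k, l, m. Define f on positive integers recursively by f(1) = 1 and f(l+1) = c(1,l)·f(l). Then f(q) ≠ 0 for all q ≥ 1, and c(q,m) = f(q+m)/(f(q)·f(m)) for all positive integers q, m. -/
/-! The associativity constraint at `k = 1` is exactly what makes `f (q + m) = c q m * (f q * f m)`
propagate from `q` to `q + 1`, the case `q = 1` being the recursion for `f`; since `f` is a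
product of nonzero values of `c`, one may then divide by `f q * f m`. -/

section PsiCoefficient

variable {M : Type*} {c : ℕ → ℕ → M} {f : ℕ → M}

theorem apply_ne_zero_of_rec [MonoidWithZero M] [NoZeroDivisors M] [Nontrivial M]
    (hc_ne : ∀ l : ℕ, 1 ≤ l → c 1 l ≠ 0) (hf1 : f 1 = 1)
    (hfrec : ∀ l : ℕ, 1 ≤ l → f (l + 1) = c 1 l * f l) {q : ℕ} (hq : 1 ≤ q) : f q ≠ 0 := by
  induction q, hq using Nat.le_induction with
  | base => rw [hf1]; exact one_ne_zero
  | succ q hq ih => rw [hfrec q hq]; exact mul_ne_zero (hc_ne q hq) ih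

theorem apply_add_eq_mul_mul_of_rec [CommMonoid M]
    (hassoc : ∀ l m : ℕ, 1 ≤ l → 1 ≤ m → c 1 l * c (1 + l) m = c 1 (l + m) * c l m)
    (hf1 : f 1 = 1) (hfrec : ∀ l : ℕ, 1 ≤ l → f (l + 1) = c 1 l * f l)
    {q m : ℕ} (hq : 1 ≤ q) (hm : 1 ≤ m) : f (q + m) = c q m * (f q * f m) := by
  induction q, hq using Nat.le_induction with
  | base => rw [add_comm, hfrec m hm, hf1, one_mul]
  | succ q hq ih =>
    calc f (q + 1 + m) = c 1 (q + m) * f (q + m) := by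
          rw [add_right_comm]; exact hfrec _ (by omega)
      _ = c 1 (q + m) * c q m * (f q * f m) := by rw [ih, mul_assoc]
      _ = c 1 q * c (1 + q) m * (f q * f m) := by rw [hassoc q m hq hm]
      _ = c (q + 1) m * (f (q + 1) * f m) := by rw [hfrec q hq, add_comm q 1]; ac_rfl

end PsiCoefficient

/-- Solution of the associativity constraint for the ψ-product coefficient
`c(p,q)`: if `c` is nonzero on positive arguments, satisfies
`c(k,l)·c(k+l,m) = c(k,l+m)·c(l,m)` for positive `k,l,m`, and `f` is defined
recursively by `f(1) = 1`, `f(l+1) = c(1,l)·f(l)`, then `f` is nonzero on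
positive integers and `c(q,m) = f(q+m)/(f(q)·f(m))`. -/
theorem psi_product_coefficient_solution
    (c : ℕ → ℕ → ℂ)
    (hc_ne : ∀ k l : ℕ, 1 ≤ k → 1 ≤ l → c k l ≠ 0)
    (hassoc : ∀ k l m : ℕ, 1 ≤ k → 1 ≤ l → 1 ≤ m →
      c k l * c (k + l) m = c k (l + m) * c l m)
    (f : ℕ → ℂ)
    (hf1 : f 1 = 1)
    (hfrec : ∀ l : ℕ, 1 ≤ l → f (l + 1) = c 1 l * f l) :
    (∀ q : ℕ, 1 ≤ q → f q ≠ 0) ∧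
    (∀ q m : ℕ, 1 ≤ q → 1 ≤ m → c q m = f (q + m) / (f q * f m)) := by
  have hf_ne : ∀ q : ℕ, 1 ≤ q → f q ≠ 0 := fun q hq =>
    apply_ne_zero_of_rec (hc_ne 1 · le_rfl) hf1 hfrec hq
  refine ⟨hf_ne, fun q m hq hm => ?_⟩
  exact eq_div_of_mul_eq (mul_ne_zero (hf_ne q hq) (hf_ne m hm))
    (apply_add_eq_mul_mul_of_rec (hassoc 1 · · le_rfl) hf1 hfrec hq hm).symm
end

section
/- Let c : ℕ → ℕ → ℂ take nonzero values on positive arguments and satisfy c(k,l)·c(k+l,m) = c(k,l+m)·c(l,m) for all positive integers k, l, m, and define f on positive integers by f(1) = 1 and f(l+1) = c(1,l)·f(l). Then for all positive integers l, m and every natural number k ≥ 0, c(l+k, m)·f(l+m)·f(l+k) = c(l, m)·f(l+m+k)·f(l). -/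
/-!
Associativity with `k = 1`, combined with `f (n + 1) = c 1 n * f n`, gives
`c (n + 1) m * f (n + 1) = c 1 (n + m) * c n m * f n`. Hence raising `l + k` by one multiplies
both sides of the identity by `c 1 (l + m + k)`, and induction on `k` starts from the trivial
case `k = 0`.
-/

namespace PsiProduct

variable {M : Type*} [CommMonoid M] {c : ℕ → ℕ → M} {f : ℕ → M}

theorem coeff_succ_mul_eq
    (hassoc : ∀ k l m : ℕ, 1 ≤ k → 1 ≤ l → 1 ≤ m →
      c k l * c (k + l) m = c k (l + m) * c l m)
    (hfrec : ∀ l : ℕ, 1 ≤ l → f (l + 1) = c 1 l * f l)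
    {n m : ℕ} (hn : 1 ≤ n) (hm : 1 ≤ m) :
    c (n + 1) m * f (n + 1) = c 1 (n + m) * (c n m * f n) :=
  calc c (n + 1) m * f (n + 1) = c 1 n * c (1 + n) m * f n := by
        rw [hfrec n hn, add_comm n 1]; ac_rfl
    _ = c 1 (n + m) * (c n m * f n) := by
        rw [hassoc 1 n m le_rfl hn hm, mul_assoc]

theorem coeff_add_mul_eq
    (hassoc : ∀ k l m : ℕ, 1 ≤ k → 1 ≤ l → 1 ≤ m →
      c k l * c (k + l) m = c k (l + m) * c l m)
    (hfrec : ∀ l : ℕ, 1 ≤ l → f (l + 1) = c 1 l * f l)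
    {l m : ℕ} (hl : 1 ≤ l) (hm : 1 ≤ m) (k : ℕ) :
    c (l + k) m * f (l + m) * f (l + k) = c l m * f (l + m + k) * f l := by
  induction k with
  | zero => rfl
  | succ k ih =>
    calc c (l + k + 1) m * f (l + m) * f (l + k + 1)
        = f (l + m) * (c (l + k + 1) m * f (l + k + 1)) := by ac_rfl
      _ = c 1 (l + m + k) * (c (l + k) m * f (l + m) * f (l + k)) := by
        rw [coeff_succ_mul_eq hassoc hfrec (by omega) hm, add_right_comm l k m]; ac_rfl
      _ = c l m * (c 1 (l + m + k) * f (l + m + k)) * f l := by rw [ih]; ac_rfl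
      _ = c l m * f (l + m + k + 1) * f l := by rw [hfrec _ (by omega)]

end PsiProduct

theorem psi_product_coefficient_induction_general
    (c : ℕ → ℕ → ℂ)
    (hassoc : ∀ k l m : ℕ, 1 ≤ k → 1 ≤ l → 1 ≤ m →
      c k l * c (k + l) m = c k (l + m) * c l m)
    (f : ℕ → ℂ)
    (hfrec : ∀ l : ℕ, 1 ≤ l → f (l + 1) = c 1 l * f l) :
    ∀ l m : ℕ, 1 ≤ l → 1 ≤ m → ∀ k : ℕ,
      c (l + k) m * f (l + m) * f (l + k) = c l m * f (l + m + k) * f l :=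
  fun _ _ hl hm k => PsiProduct.coeff_add_mul_eq hassoc hfrec hl hm k

/-- Induction lemma (Eq. (eq:induction) of Appendix A) used to solve the
associativity condition for the ψ-product coefficient: for positive `l, m`
and any `k ≥ 0`, `c(l+k,m)·f(l+m)·f(l+k) = c(l,m)·f(l+m+k)·f(l)`. -/
theorem psi_product_coefficient_induction
    (c : ℕ → ℕ → ℂ)
    (hc_ne : ∀ k l : ℕ, 1 ≤ k → 1 ≤ l → c k l ≠ 0)
    (hassoc : ∀ k l m : ℕ, 1 ≤ k → 1 ≤ l → 1 ≤ m →
      c k l * c (k + l) m = c k (l + m) * c l m)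
    (f : ℕ → ℂ)
    (hf1 : f 1 = 1)
    (hfrec : ∀ l : ℕ, 1 ≤ l → f (l + 1) = c 1 l * f l) :
    ∀ l m : ℕ, 1 ≤ l → 1 ≤ m → ∀ k : ℕ,
      c (l + k) m * f (l + m) * f (l + k) = c l m * f (l + m + k) * f l :=
  psi_product_coefficient_induction_general c hassoc f hfrec
end

section
/- Let f : ℕ → ℂ satisfy f(k) ≠ 0 for all k, |f(1)| = 1, and |f(k+l)|²·k!·l! = (k+l)!·|f(k)|²·|f(l)|² for all natural numbers k, l ≥ 0. Then |f(k)| = √(k!) for every natural number k. -/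
/-!
Writing `g k = ‖f k‖ ^ 2`, the hypothesis says that `g k / k!` is multiplicative on `(ℕ, +)`.
Being nonzero at `0` it equals `1` there, and being `1` at `1` it is identically `1`.
-/

open Nat

theorem eq_factorial_of_mul_factorial_eq {K : Type*} [Field K] [CharZero K] (g : ℕ → K)
    (h0 : g 0 ≠ 0) (h1 : g 1 = 1)
    (h : ∀ k l, g (k + l) * k ! * l ! = (k + l)! * g k * g l) (k : ℕ) :
    g k = k ! := by
  induction k with
  | zero =>
    have h00 : g 0 * g 0 = g 0 * 1 := by simpa using (h 0 0).symm
    simpa using mul_left_cancel₀ h0 h00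
  | succ n ih =>
    have hn1 : g (n + 1) * n ! = ((n + 1) * n !) * n ! := by
      simpa [ih, h1, factorial_succ, mul_comm] using h n 1
    rw [mul_right_cancel₀ (by exact_mod_cast factorial_ne_zero n) hn1, factorial_succ]
    push_cast
    ring

/-- Core of the "only if" direction of the cluster decomposition theorem:
if `f : ℕ → ℂ` is nowhere zero, `|f(1)| = 1`, and
`|f(k+l)|²·k!·l! = (k+l)!·|f(k)|²·|f(l)|²` for all `k, l`, then
`|f(k)| = √(k!)` for every `k`. -/
theorem cluster_decomposition_normalization
    (f : ℕ → ℂ)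
    (hne : ∀ k : ℕ, f k ≠ 0)
    (hf1 : ‖f 1‖ = 1)
    (hmod : ∀ k l : ℕ,
      ‖f (k + l)‖ ^ 2 * (Nat.factorial k : ℝ) * (Nat.factorial l : ℝ) =
        (Nat.factorial (k + l) : ℝ) * ‖f k‖ ^ 2 * ‖f l‖ ^ 2) :
    ∀ k : ℕ, ‖f k‖ = Real.sqrt (Nat.factorial k : ℝ) := by
  intro k
  have hsq : ‖f k‖ ^ 2 = k ! :=
    eq_factorial_of_mul_factorial_eq (fun k ↦ ‖f k‖ ^ 2) (by simpa using hne 0)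
      (by simp [hf1]) hmod k
  rw [← hsq, Real.sqrt_sq (norm_nonneg _)]
end

section
/- Let V be a finite-dimensional complex vector space with dim V = d and Λ(V) its exterior algebra over ℂ. If Z ∈ Λ(V) has zero scalar component, then Zⁿ = 0 for every natural number n > ⌈d/2⌉. -/
/-!
Split `Z` into its odd-degree part `a` and its even-degree part `b`; when the scalar component
vanishes, `b` lives in degrees `≥ 2`. Odd elements square to zero and even elements are central,
so `Z ^ (m + 1) = b ^ (m + 1) + (m + 1) • (a * b ^ m)`. The two terms live in degrees
`≥ 2m + 2` and `≥ 2m + 1`, and `2m + 1 > d` as soon as `m ≥ ⌈d/2⌉`.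
-/

section GradedFiltration

variable {R A : Type*} [CommSemiring R] [Semiring A] [Algebra R A]

def gradedFiltration (𝒜 : ℕ → Submodule R A) (k : ℕ) : Submodule R A :=
  ⨆ (i) (_ : k ≤ i), 𝒜 i

variable {𝒜 : ℕ → Submodule R A}

theorem mem_gradedFiltration_of_mem {k i : ℕ} (h : k ≤ i) {x : A} (hx : x ∈ 𝒜 i) :
    x ∈ gradedFiltration 𝒜 k :=
  le_iSup₂ (f := fun i (_ : k ≤ i) => 𝒜 i) i h hx

theorem gradedFiltration_eq_bot {k : ℕ} (h : ∀ i, k ≤ i → 𝒜 i = ⊥) :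
    gradedFiltration 𝒜 k = ⊥ :=
  iSup₂_eq_bot.mpr h

variable [SetLike.GradedMonoid 𝒜]

theorem gradedFiltration_mul_le (k l : ℕ) :
    gradedFiltration 𝒜 k * gradedFiltration 𝒜 l ≤ gradedFiltration 𝒜 (k + l) := by
  rw [gradedFiltration, Submodule.iSup_mul]
  refine iSup_le fun i => ?_
  rw [Submodule.iSup_mul]
  refine iSup_le fun hi => ?_
  rw [gradedFiltration, Submodule.mul_iSup]
  refine iSup_le fun j => ?_
  rw [Submodule.mul_iSup]
  refine iSup_le fun hj => Submodule.mul_le.mpr fun x hx y hy => ?_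
  exact mem_gradedFiltration_of_mem (add_le_add hi hj) (SetLike.mul_mem_graded hx hy)

theorem mul_mem_gradedFiltration {k l : ℕ} {x y : A} (hx : x ∈ gradedFiltration 𝒜 k)
    (hy : y ∈ gradedFiltration 𝒜 l) : x * y ∈ gradedFiltration 𝒜 (k + l) :=
  gradedFiltration_mul_le k l (Submodule.mul_mem_mul hx hy)

theorem pow_mem_gradedFiltration {k : ℕ} {x : A} (hx : x ∈ gradedFiltration 𝒜 k) (m : ℕ) :
    x ^ m ∈ gradedFiltration 𝒜 (k * m) := by
  induction m with
  | zero =>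
    rw [pow_zero]
    exact mem_gradedFiltration_of_mem (Nat.mul_zero k).le SetLike.GradedOne.one_mem
  | succ m ih =>
    rw [pow_succ, Nat.mul_succ]
    exact mul_mem_gradedFiltration ih hx

end GradedFiltration

theorem Commute.add_pow_succ_of_mul_self_eq_zero {A : Type*} [Semiring A] {a b : A}
    (h : Commute a b) (ha : a * a = 0) (n : ℕ) :
    (a + b) ^ (n + 1) = b ^ (n + 1) + (n + 1) • (a * b ^ n) := by
  have ha_pow : ∀ k, a ^ (k + 2) = 0 := fun k => by rw [pow_add, sq, ha, mul_zero]
  rw [h.add_pow, Finset.sum_range_succ', Finset.sum_range_succ',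
    Finset.sum_eq_zero fun k _ => by rw [ha_pow, zero_mul, zero_mul], nsmul_eq_mul']
  simp [add_comm]

namespace ExteriorAlgebra

variable {R M : Type*} [CommRing R] [AddCommGroup M] [Module R M]

theorem ι_mul_eq_of_mem_exteriorPower (v : M) {j : ℕ} {y : ExteriorAlgebra R M}
    (hy : y ∈ ⋀[R]^j M) : ι R v * y = (-1 : R) ^ j • (y * ι R v) := by
  induction hy using Submodule.pow_induction_on_left' with
  | algebraMap r => rw [pow_zero, one_smul, Algebra.commutes]
  | add x y i _ _ hx hy => rw [mul_add, add_mul, smul_add, hx, hy]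
  | mem_mul m hm i y _ ih =>
    obtain ⟨w, rfl⟩ := hm
    have hvw : ι R v * ι R w = -(ι R w * ι R v) :=
      eq_neg_of_add_eq_zero_left (ι_add_mul_swap v w)
    calc ι R v * (ι R w * y) = -(ι R w * (ι R v * y)) := by
          rw [← mul_assoc, hvw, neg_mul, mul_assoc]
      _ = (-1 : R) ^ (i + 1) • (ι R w * y * ι R v) := by
          rw [ih, mul_smul_comm, pow_succ, mul_neg_one, neg_smul, mul_assoc]

theorem mul_eq_of_mem_exteriorPower {i j : ℕ} {x y : ExteriorAlgebra R M}
    (hx : x ∈ ⋀[R]^i M) (hy : y ∈ ⋀[R]^j M) : x * y = (-1 : R) ^ (i * j) • (y * x) := by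
  induction hx using Submodule.pow_induction_on_left' with
  | algebraMap r => rw [zero_mul, pow_zero, one_smul, Algebra.commutes]
  | add x x' i _ _ hx hx' => rw [add_mul, mul_add, smul_add, hx, hx']
  | mem_mul m hm i x _ ih =>
    obtain ⟨w, rfl⟩ := hm
    rw [mul_assoc, ih, mul_smul_comm, ← mul_assoc, ι_mul_eq_of_mem_exteriorPower w hy,
      smul_mul_assoc, smul_smul, ← pow_add, mul_assoc, Nat.succ_mul]

theorem algebraMapInv_eq_zero_of_mem_exteriorPower {i : ℕ} (hi : i ≠ 0)
    {x : ExteriorAlgebra R M} (hx : x ∈ ⋀[R]^i M) : algebraMapInv x = 0 := by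
  obtain ⟨j, rfl⟩ := Nat.exists_eq_succ_of_ne_zero hi
  rw [exteriorPower, pow_succ'] at hx
  induction hx using Submodule.mul_induction_on' with
  | mem_mul_mem m hm y _ =>
    obtain ⟨v, rfl⟩ := hm
    simp [algebraMapInv]
  | add x _ y _ hx hy => rw [map_add, hx, hy, add_zero]

theorem exteriorPower_eq_bot [Nontrivial R] [Module.Free R M] [Module.Finite R M] {i : ℕ}
    (hi : Module.finrank R M < i) : ⋀[R]^i M = ⊥ := by
  rw [← Submodule.subsingleton_iff_eq_bot, ← Module.finrank_eq_zero_iff_of_free (R := R),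
    exteriorPower.finrank_eq, Nat.choose_eq_zero_of_lt hi]

theorem mem_iSup_exteriorPower (x : ExteriorAlgebra R M) : x ∈ ⨆ i : ℕ, ⋀[R]^i M := by
  rw [(DirectSum.Decomposition.isInternal (fun i : ℕ => ⋀[R]^i M)).submodule_iSup_eq_top]
  trivial

variable (R M) in
def oddDegrees : Submodule R (ExteriorAlgebra R M) :=
  ⨆ i : ℕ, ⋀[R]^(2 * i + 1) M

variable (R M) in
def positiveEvenDegrees : Submodule R (ExteriorAlgebra R M) :=
  ⨆ i : ℕ, ⋀[R]^(2 * i + 2) M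

theorem mul_eq_neg_mul_of_mem_oddDegrees {x y : ExteriorAlgebra R M}
    (hx : x ∈ oddDegrees R M) (hy : y ∈ oddDegrees R M) : x * y = -(y * x) := by
  induction hx using Submodule.iSup_induction' with
  | mem i x hx =>
    induction hy using Submodule.iSup_induction' with
    | mem j y hy =>
      rw [mul_eq_of_mem_exteriorPower hx hy,
        ((odd_two_mul_add_one i).mul (odd_two_mul_add_one j)).neg_one_pow, neg_one_smul]
    | zero => rw [mul_zero, zero_mul, neg_zero]
    | add y y' _ _ hy hy' => rw [mul_add, add_mul, hy, hy', neg_add]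
  | zero => rw [mul_zero, zero_mul, neg_zero]
  | add x x' _ _ hx hx' => rw [mul_add, add_mul, hx, hx', neg_add]

theorem mul_self_eq_zero_of_mem_oddDegrees (h2 : IsUnit (2 : R)) {x : ExteriorAlgebra R M}
    (hx : x ∈ oddDegrees R M) : x * x = 0 := by
  have : (2 : R) • (x * x) = 0 := by
    rw [two_smul, add_eq_zero_iff_eq_neg]
    exact mul_eq_neg_mul_of_mem_oddDegrees hx hx
  exact h2.smul_eq_zero.mp this

theorem commute_of_mem_positiveEvenDegrees {y : ExteriorAlgebra R M}
    (hy : y ∈ positiveEvenDegrees R M) (x : ExteriorAlgebra R M) : Commute x y := by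
  induction hy using Submodule.iSup_induction' with
  | mem j y hy =>
    induction mem_iSup_exteriorPower x using Submodule.iSup_induction' with
    | mem i x hx =>
      rw [Commute, SemiconjBy, mul_eq_of_mem_exteriorPower hx hy,
        (((even_two_mul j).add even_two).mul_left i).neg_one_pow, one_smul]
    | zero => exact Commute.zero_left y
    | add x x' _ _ hx hx' => exact hx.add_left hx'
  | zero => exact Commute.zero_right x
  | add y y' _ _ hy hy' => exact hy.add_right hy'

theorem oddDegrees_le_gradedFiltration_one :
    oddDegrees R M ≤ gradedFiltration (fun i : ℕ => ⋀[R]^i M) 1 :=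
  iSup_le fun _ _ hx => mem_gradedFiltration_of_mem (by omega) hx

theorem positiveEvenDegrees_le_gradedFiltration_two :
    positiveEvenDegrees R M ≤ gradedFiltration (fun i : ℕ => ⋀[R]^i M) 2 :=
  iSup_le fun _ _ hx => mem_gradedFiltration_of_mem (by omega) hx

theorem exists_eq_algebraMap_add_add (x : ExteriorAlgebra R M) :
    ∃ a ∈ oddDegrees R M, ∃ b ∈ positiveEvenDegrees R M,
      x = algebraMap R _ (algebraMapInv x) + a + b := by
  induction mem_iSup_exteriorPower x using Submodule.iSup_induction' with
  | mem i x hx =>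
    rcases i with _ | i
    · rw [exteriorPower, pow_zero] at hx
      obtain ⟨r, rfl⟩ := Submodule.mem_one.mp hx
      exact ⟨0, zero_mem _, 0, zero_mem _, by rw [algebraMap_leftInverse, add_zero, add_zero]⟩
    rw [algebraMapInv_eq_zero_of_mem_exteriorPower i.succ_ne_zero hx, map_zero]
    simp only [zero_add]
    rcases Nat.even_or_odd' i with ⟨k, rfl | rfl⟩
    · exact ⟨x, Submodule.mem_iSup_of_mem k hx, 0, zero_mem _, (add_zero x).symm⟩
    · exact ⟨0, zero_mem _, x, Submodule.mem_iSup_of_mem k hx, (zero_add x).symm⟩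
  | zero => exact ⟨0, zero_mem _, 0, zero_mem _, by rw [map_zero, map_zero, add_zero, add_zero]⟩
  | add x y _ _ hx hy =>
    obtain ⟨a, ha, b, hb, hx⟩ := hx
    obtain ⟨a', ha', b', hb', hy⟩ := hy
    refine ⟨a + a', add_mem ha ha', b + b', add_mem hb hb', ?_⟩
    rw [map_add, map_add]
    nth_rw 1 [hx, hy]
    abel

theorem eq_zero_of_mem_gradedFiltration [Nontrivial R] [Module.Free R M] [Module.Finite R M]
    {k : ℕ} (hk : Module.finrank R M < k) {x : ExteriorAlgebra R M}
    (hx : x ∈ gradedFiltration (fun i : ℕ => ⋀[R]^i M) k) : x = 0 := by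
  rwa [gradedFiltration_eq_bot fun _ hi => exteriorPower_eq_bot (hk.trans_le hi),
    Submodule.mem_bot] at hx

end ExteriorAlgebra

open ExteriorAlgebra in
/-- Nilpotency bound Eq. (eq:Z_nilpotent): if `Z` in the exterior algebra of a
`d`-dimensional complex vector space has zero scalar component, then `Zⁿ = 0`
for every `n > ⌈d/2⌉`. -/
theorem exteriorAlgebra_nilpotency_bound
    (V : Type*) [AddCommGroup V] [Module ℂ V] [FiniteDimensional ℂ V]
    (Z : ExteriorAlgebra ℂ V)
    (hZ : ExteriorAlgebra.algebraMapInv Z = 0)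
    (n : ℕ) (hn : ⌈(Module.finrank ℂ V : ℚ) / 2⌉₊ < n) :
    Z ^ n = 0 := by
  obtain ⟨m, rfl⟩ := Nat.exists_eq_add_one_of_ne_zero (Nat.ne_zero_of_lt hn)
  have hdim : Module.finrank ℂ V ≤ 2 * m := by
    have := Nat.ceil_le.mp (Nat.lt_succ_iff.mp hn)
    exact_mod_cast (by linarith : (Module.finrank ℂ V : ℚ) ≤ 2 * m)
  obtain ⟨a, ha, b, hb, hZab⟩ := exists_eq_algebraMap_add_add Z
  rw [hZ, map_zero, zero_add] at hZab
  have ha₁ := oddDegrees_le_gradedFiltration_one ha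
  have hb₂ := positiveEvenDegrees_le_gradedFiltration_two hb
  have hb_pow : b ^ (m + 1) = 0 :=
    eq_zero_of_mem_gradedFiltration (by omega) (pow_mem_gradedFiltration hb₂ (m + 1))
  have ha_mul : a * b ^ m = 0 :=
    eq_zero_of_mem_gradedFiltration (by omega)
      (mul_mem_gradedFiltration ha₁ (pow_mem_gradedFiltration hb₂ m))
  rw [hZab, (commute_of_mem_positiveEvenDegrees hb a).add_pow_succ_of_mul_self_eq_zero
      (mul_self_eq_zero_of_mem_oddDegrees two_ne_zero.isUnit ha),
    hb_pow, ha_mul, smul_zero, add_zero]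
end

section
/- Let 𝒜 be a complex Banach algebra and let A, B ∈ 𝒜 be such that C := AB − BA commutes with both A and B and satisfies C² = 0. Then exp(A + B) = ½·(exp(A)·exp(B) + exp(B)·exp(A)). -/
/-!
If `C = ⁅A, B⁆` commutes with `A`, then `u ↦ exp (-u A) (B + u C) exp (u A)` has zero derivative,
so `exp (t A) B = (B + t C) exp (t A)`. If `C` also commutes with `B`, this turns the derivative of
`f t = exp (-t (A + B)) exp (t A) exp (t B)` into `t C f t`, whence `exp (-(t²/2) C) f t` is
constant and `exp A exp B = exp (A + B) exp (C / 2)`. Exchanging `A` and `B` replaces `C` by `-C`,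
and `C² = 0` makes `exp (C / 2) + exp (-C / 2) = 2`.
-/

open NormedSpace

theorem exp_eq_one_add_of_sq_eq_zero {𝔸 : Type*} [Ring 𝔸] [Algebra ℚ 𝔸] [TopologicalSpace 𝔸]
    [IsTopologicalRing 𝔸] [T2Space 𝔸] {x : 𝔸} (hx : x ^ 2 = 0) : exp x = 1 + x := by
  rw [congrFun exp_eq_tsum_rat x, tsum_eq_sum (s := Finset.range 2)]
  · simp [Finset.sum_range_succ]
  · intro n hn
    rw [Finset.mem_range, not_lt] at hn
    rw [← Nat.sub_add_cancel hn, pow_add, hx, mul_zero, smul_zero]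

theorem exp_add_exp_neg_of_sq_eq_zero {𝔸 : Type*} [Ring 𝔸] [Algebra ℚ 𝔸] [TopologicalSpace 𝔸]
    [IsTopologicalRing 𝔸] [T2Space 𝔸] {x : 𝔸} (hx : x ^ 2 = 0) : exp x + exp (-x) = 2 := by
  rw [exp_eq_one_add_of_sq_eq_zero hx, exp_eq_one_add_of_sq_eq_zero (by rwa [neg_sq]),
    add_add_add_comm, add_neg_cancel, add_zero, one_add_one_eq_two]

theorem exp_mul_exp_neg {𝔸 : Type*} [NormedRing 𝔸] [NormedAlgebra ℚ 𝔸] [CompleteSpace 𝔸]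
    (x : 𝔸) : exp x * exp (-x) = 1 := by
  rw [← exp_add_of_commute (Commute.refl x).neg_right, add_neg_cancel, exp_zero]

section RCLike

variable {𝕂 𝔸 : Type*} [RCLike 𝕂]

theorem eq_of_forall_hasDerivAt_zero {E : Type*} [NormedAddCommGroup E] [NormedSpace 𝕂 E]
    {f : 𝕂 → E} (hf : ∀ t, HasDerivAt f 0 t) (s t : 𝕂) : f s = f t :=
  is_const_of_deriv_eq_zero (fun t => (hf t).differentiableAt) (fun t => (hf t).deriv) s t

variable [NormedRing 𝔸] [NormedAlgebra 𝕂 𝔸] [CompleteSpace 𝔸]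

theorem exp_smul_mul_of_commute_lie {A B : 𝔸} (hA : Commute ⁅A, B⁆ A) (t : 𝕂) :
    exp (t • A) * B = (B + t • ⁅A, B⁆) * exp (t • A) := by
  let +nondep : NormedAlgebra ℚ 𝔸 := .restrictScalars ℚ 𝕂 𝔸
  set C := ⁅A, B⁆ with hC
  have hcancel (u : 𝕂) : -A * (B + u • C) + (C + (B + u • C) * A) = 0 := by
    simp only [mul_add, add_mul, smul_mul_assoc, mul_smul_comm, neg_mul, smul_neg, hA.eq]
    rw [hC, Ring.lie_def]
    abel
  have hconj (u : 𝕂) :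
      HasDerivAt (fun u : 𝕂 => exp (u • -A) * ((B + u • C) * exp (u • A))) 0 u := by
    refine ((hasDerivAt_exp_smul_const (-A) u).mul ((((hasDerivAt_id u).smul_const C).const_add
      B).mul (hasDerivAt_exp_smul_const' A u))).congr_deriv ?_
    show exp (u • -A) * -A * ((B + u • C) * exp (u • A)) +
      exp (u • -A) * ((1 : 𝕂) • C * exp (u • A) + (B + u • C) * (A * exp (u • A))) = 0
    calc _ = exp (u • -A) * ((-A * (B + u • C) + (C + (B + u • C) * A)) * exp (u • A)) := by
          simp only [one_smul, add_mul, mul_add, mul_assoc]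
      _ = 0 := by rw [hcancel, zero_mul, mul_zero]
  have h := eq_of_forall_hasDerivAt_zero hconj t 0
  simp only [zero_smul, exp_zero, add_zero, mul_one, one_mul] at h
  calc exp (t • A) * B
      = exp (t • A) * (exp (t • -A) * ((B + t • C) * exp (t • A))) := by rw [h]
    _ = (B + t • C) * exp (t • A) := by rw [← mul_assoc, smul_neg, exp_mul_exp_neg, one_mul]

theorem hasDerivAt_exp_smul_neg_add_mul_exp_smul_mul_exp_smul {A B : 𝔸}
    (hA : Commute ⁅A, B⁆ A) (hB : Commute ⁅A, B⁆ B) (t : 𝕂) :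
    HasDerivAt (fun u : 𝕂 => exp (u • -(A + B)) * (exp (u • A) * exp (u • B)))
      (t • (⁅A, B⁆ * (exp (t • -(A + B)) * (exp (t • A) * exp (t • B))))) t := by
  let +nondep : NormedAlgebra ℚ 𝔸 := .restrictScalars ℚ 𝕂 𝔸
  refine ((hasDerivAt_exp_smul_const (-(A + B)) t).mul
    ((hasDerivAt_exp_smul_const' A t).mul (hasDerivAt_exp_smul_const' B t))).congr_deriv ?_
  have hcomm : ⁅A, B⁆ * exp (t • -(A + B)) = exp (t • -(A + B)) * ⁅A, B⁆ :=
    ((hA.add_right hB).neg_right.smul_right t).exp_right.eq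
  show exp (t • -(A + B)) * -(A + B) * (exp (t • A) * exp (t • B)) +
      exp (t • -(A + B)) * (A * exp (t • A) * exp (t • B) + exp (t • A) * (B * exp (t • B))) = _
  rw [← mul_assoc (exp (t • A)) B, exp_smul_mul_of_commute_lie hA t]
  calc _ = exp (t • -(A + B)) *
        ((-(A + B) + (A + (B + t • ⁅A, B⁆))) * (exp (t • A) * exp (t • B))) := by
        simp only [add_mul, mul_add, mul_assoc]
    _ = _ := by
      rw [show -(A + B) + (A + (B + t • ⁅A, B⁆)) = t • ⁅A, B⁆ by abel, smul_mul_assoc,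
        mul_smul_comm, ← mul_assoc, ← hcomm, mul_assoc]

theorem exp_mul_exp_of_commute_lie {A B : 𝔸} (hA : Commute ⁅A, B⁆ A) (hB : Commute ⁅A, B⁆ B) :
    exp A * exp B = exp (A + B) * exp ((2⁻¹ : 𝕂) • ⁅A, B⁆) := by
  let +nondep : NormedAlgebra ℚ 𝔸 := .restrictScalars ℚ 𝕂 𝔸
  set f : 𝕂 → 𝔸 := fun u => exp (u • -(A + B)) * (exp (u • A) * exp (u • B)) with hf
  have hg (u : 𝕂) : HasDerivAt (fun u => exp ((u ^ 2 / 2) • -⁅A, B⁆) * f u) 0 u := by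
    have hsq : HasDerivAt (fun u : 𝕂 => u ^ 2 / 2) u u := by
      simpa using (hasDerivAt_pow 2 u).div_const 2
    refine (((hasDerivAt_exp_smul_const (-⁅A, B⁆) (u ^ 2 / 2)).scomp u hsq).mul
      (hasDerivAt_exp_smul_neg_add_mul_exp_smul_mul_exp_smul hA hB u)).congr_deriv ?_
    simp only [smul_mul_assoc, mul_smul_comm, mul_neg, neg_mul, mul_assoc, smul_neg,
      neg_add_cancel]
  have h := eq_of_forall_hasDerivAt_zero hg 1 0
  have hf0 : f 0 = 1 := by simp [hf]
  rw [show (1 : 𝕂) ^ 2 / 2 = 2⁻¹ by norm_num, show (0 : 𝕂) ^ 2 / 2 = 0 by norm_num, zero_smul,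
    exp_zero, hf0, one_mul] at h
  calc exp A * exp B = exp (A + B) * f 1 := by
        show _ = _ * (exp ((1 : 𝕂) • -(A + B)) * (exp ((1 : 𝕂) • A) * exp ((1 : 𝕂) • B)))
        rw [one_smul, one_smul, one_smul, ← mul_assoc, exp_mul_exp_neg, one_mul]
    _ = exp (A + B) * (exp ((2⁻¹ : 𝕂) • ⁅A, B⁆) * (exp ((2⁻¹ : 𝕂) • -⁅A, B⁆) * f 1)) := by
        rw [← mul_assoc (exp ((2⁻¹ : 𝕂) • ⁅A, B⁆)), smul_neg, exp_mul_exp_neg, one_mul]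
    _ = _ := by rw [h, mul_one]

end RCLike

/-- Symmetrized-product exponential identity Eq. (eq:expAplusB): in a complex
Banach algebra, if `C = AB − BA` commutes with `A` and `B` and `C² = 0`, then
`exp(A+B) = ½(exp A · exp B + exp B · exp A)`. -/
theorem exp_add_eq_symmetrized_product
    (𝒜 : Type*) [NormedRing 𝒜] [NormedAlgebra ℂ 𝒜] [CompleteSpace 𝒜]
    (A B : 𝒜)
    (hCA : Commute (A * B - B * A) A)
    (hCB : Commute (A * B - B * A) B)
    (hC2 : (A * B - B * A) ^ 2 = 0) :
    exp (A + B) = (2 : ℂ)⁻¹ • (exp A * exp B + exp B * exp A) := by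
  let +nondep : NormedAlgebra ℚ 𝒜 := .restrictScalars ℚ ℂ 𝒜
  rw [← Ring.lie_def] at hCA hCB hC2
  have hlie : ⁅B, A⁆ = -⁅A, B⁆ := by rw [Ring.lie_def, Ring.lie_def, neg_sub]
  have hAB := exp_mul_exp_of_commute_lie (𝕂 := ℂ) hCA hCB
  have hBA := exp_mul_exp_of_commute_lie (𝕂 := ℂ) (A := B) (B := A)
    (by rw [hlie]; exact hCB.neg_left) (by rw [hlie]; exact hCA.neg_left)
  rw [add_comm B A, hlie, smul_neg] at hBA
  have hsq : ((2 : ℂ)⁻¹ • ⁅A, B⁆) ^ 2 = 0 := by rw [smul_pow, hC2, smul_zero]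
  rw [hAB, hBA, ← mul_add, exp_add_exp_neg_of_sq_eq_zero hsq, mul_two, ← two_smul ℂ,
    inv_smul_smul₀ two_ne_zero]
end

section
/- Let 𝒜 be a complex Banach algebra and let A, D ∈ 𝒜 be such that AD − DA commutes with both A and D and satisfies (AD − DA)² = 0. Then the map t ↦ exp(A + t·D), t ∈ ℝ, is differentiable at t = 0 with derivative ½·(D·exp(A) + exp(A)·D). -/
/-!
When `Z = ⁅X, Y⁆` commutes with `X` and `Y` and `Z ^ 2 = 0`, the Baker–Campbell–Hausdorff
series truncates: `exp (X + Y) = exp X * exp Y * (1 - Z / 2)`. Indeed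
`u ↦ exp (u • X) * exp (u • Y) * (1 - (u ^ 2 / 2) • Z)` and `u ↦ exp (u • (X + Y))` both solve
`f' = f * (X + Y)` with `f 0 = 1`, the only input being `X * exp Y = exp Y * (X + Z)`.
With `C = ⁅A, D⁆` and `Y = t • D`, this makes `t ↦ exp (A + t • D)` an explicit product whose
derivative at `0` is `exp A * (D - C / 2)`, and `D * exp A = exp A * (D - C)` symmetrizes it.
-/

open NormedSpace

theorem Ring.lie_smul {R A : Type*} [CommSemiring R] [Ring A] [Algebra R A] (t : R) (x y : A) :
    ⁅x, t • y⁆ = t • ⁅x, y⁆ := by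
  simp only [Ring.lie_def, mul_smul_comm, smul_mul_assoc, smul_sub]

section RealBanachAlgebra

variable {𝔸 : Type*} [NormedRing 𝔸] [NormedAlgebra ℝ 𝔸] [CompleteSpace 𝔸]

-- `u ↦ f u * exp ((t - u) • W)` has zero derivative, so its values at `0` and `t` agree.
theorem eq_mul_exp_smul_of_hasDerivAt {f : ℝ → 𝔸} {W : 𝔸}
    (hf : ∀ u, HasDerivAt f (f u * W) u) (t : ℝ) : f t = f 0 * exp (t • W) := by
  have hexp (u : ℝ) :
      HasDerivAt (fun u : ℝ => exp ((t - u) • W)) (-(exp ((t - u) • W) * W)) u := by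
    simpa [Function.comp_def] using
      (hasDerivAt_exp_smul_const W (t - u)).scomp u ((hasDerivAt_id u).const_sub t)
  have hg (u : ℝ) : HasDerivAt (fun u => f u * exp ((t - u) • W)) 0 u := by
    have hW : Commute W (exp ((t - u) • W)) := ((Commute.refl W).smul_right _).exp_right
    refine ((hf u).mul (hexp u)).congr_deriv ?_
    rw [mul_neg, mul_assoc, hW.eq, add_neg_cancel]
  simpa using is_const_of_deriv_eq_zero (fun u => (hg u).differentiableAt)
    (fun u => (hg u).deriv) t 0

theorem mul_exp_eq_exp_mul_add_lie {X Y : 𝔸} (h : Commute ⁅X, Y⁆ Y) :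
    X * exp Y = exp Y * (X + ⁅X, Y⁆) := by
  have hf (u : ℝ) : HasDerivAt (fun u : ℝ => exp (u • Y) * (X + u • ⁅X, Y⁆))
      (exp (u • Y) * (X + u • ⁅X, Y⁆) * Y) u := by
    refine ((hasDerivAt_exp_smul_const Y u).mul
      (((hasDerivAt_id u).smul_const ⁅X, Y⁆).const_add X)).congr_deriv ?_
    simp only [id, one_smul]
    rw [mul_assoc, mul_assoc, ← mul_add]
    congr 1
    rw [mul_add, add_mul, smul_mul_assoc, mul_smul_comm, h.eq, Ring.lie_def]
    abel
  simpa using (eq_mul_exp_smul_of_hasDerivAt hf 1).symm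

theorem exp_add_of_lie_sq_eq_zero {X Y : 𝔸} (hX : Commute ⁅X, Y⁆ X) (hY : Commute ⁅X, Y⁆ Y)
    (hsq : ⁅X, Y⁆ ^ 2 = 0) :
    exp (X + Y) = exp X * exp Y * (1 - (2⁻¹ : ℝ) • ⁅X, Y⁆) := by
  set Z := ⁅X, Y⁆
  have hf (u : ℝ) :
      HasDerivAt (fun u : ℝ => exp (u • X) * exp (u • Y) * (1 - (2⁻¹ * u ^ 2) • Z))
      (exp (u • X) * exp (u • Y) * (1 - (2⁻¹ * u ^ 2) • Z) * (X + Y)) u := by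
    have hM : HasDerivAt (fun u : ℝ => 1 - (2⁻¹ * u ^ 2) • Z) (-(u • Z)) u := by
      simpa using (((hasDerivAt_pow 2 u).const_mul 2⁻¹).smul_const Z).const_sub 1
    have hXY : X * exp (u • Y) = exp (u • Y) * (X + u • Z) := by
      have hlie : ⁅X, u • Y⁆ = u • Z := Ring.lie_smul u X Y
      have h := mul_exp_eq_exp_mul_add_lie (X := X) (Y := u • Y)
        (by rw [hlie]; exact (hY.smul_left u).smul_right u)
      rwa [hlie] at h
    have key : (X + u • Z + Y) * (1 - (2⁻¹ * u ^ 2) • Z) - u • Z =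
        (1 - (2⁻¹ * u ^ 2) • Z) * (X + Y) := by
      have hZZ : Z * Z = 0 := by rw [← sq, hsq]
      simp only [add_mul, mul_add, mul_sub, sub_mul, mul_one, one_mul, smul_mul_assoc,
        mul_smul_comm, hZZ, smul_zero, hX.eq, hY.eq, smul_add]
      abel
    refine (((hasDerivAt_exp_smul_const X u).mul
      (hasDerivAt_exp_smul_const Y u)).mul hM).congr_deriv ?_
    rw [Pi.mul_apply, mul_assoc (exp (u • X)) X, hXY, mul_assoc (exp (u • X) * exp (u • Y)),
      ← key]
    noncomm_ring
  simpa using (eq_mul_exp_smul_of_hasDerivAt hf 1).symm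

theorem hasDerivAt_exp_add_smul_of_lie_sq_eq_zero {A D : 𝔸} (hA : Commute ⁅A, D⁆ A)
    (hD : Commute ⁅A, D⁆ D) (hsq : ⁅A, D⁆ ^ 2 = 0) :
    HasDerivAt (fun t : ℝ => exp (A + t • D)) (exp A * (D - (2⁻¹ : ℝ) • ⁅A, D⁆)) 0 := by
  have hexp : (fun t : ℝ => exp (A + t • D)) =
      fun t : ℝ => exp A * exp (t • D) * (1 - (2⁻¹ : ℝ) • (t • ⁅A, D⁆)) := by
    ext t
    rw [← Ring.lie_smul]
    refine exp_add_of_lie_sq_eq_zero ?_ ?_ ?_ <;> rw [Ring.lie_smul]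
    · exact hA.smul_left t
    · exact (hD.smul_left t).smul_right t
    · rw [smul_pow, hsq, smul_zero]
  rw [hexp]
  refine (((hasDerivAt_exp_smul_const D 0).const_mul (exp A)).mul
    ((((hasDerivAt_id 0).smul_const ⁅A, D⁆).const_smul (2⁻¹ : ℝ)).const_sub 1)).congr_deriv ?_
  simp [mul_sub, ← sub_eq_add_neg]

end RealBanachAlgebra

/-- First-order variation formula Eq. (eq:delta_eA): in a complex Banach
algebra, if `AD − DA` commutes with `A` and `D` and squares to zero, then
`t ↦ exp(A + t·D)` is differentiable at `t = 0` with derivative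
`½(D·exp A + exp A·D)`. -/
theorem hasDerivAt_exp_symmetrized
    (𝒜 : Type*) [NormedRing 𝒜] [NormedAlgebra ℂ 𝒜] [CompleteSpace 𝒜]
    (A D : 𝒜)
    (hCA : Commute (A * D - D * A) A)
    (hCD : Commute (A * D - D * A) D)
    (hC2 : (A * D - D * A) ^ 2 = 0) :
    HasDerivAt (fun t : ℝ => exp (A + (t : ℂ) • D))
      ((2 : ℂ)⁻¹ • (D * exp A + exp A * D)) 0 := by
  rw [← Ring.lie_def] at hCA hCD hC2
  have hDA : D * exp A = exp A * (D - ⁅A, D⁆) := by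
    have hlie : ⁅D, A⁆ = -⁅A, D⁆ := by simp only [Ring.lie_def, neg_sub]
    rw [sub_eq_add_neg, ← hlie]
    exact mul_exp_eq_exp_mul_add_lie (by rw [hlie]; exact hCA.neg_left)
  have hhalf : (2 : ℂ)⁻¹ • (D * exp A + exp A * D) = exp A * (D - (2⁻¹ : ℝ) • ⁅A, D⁆) := by
    rw [hDA, ← Complex.coe_smul, mul_sub, mul_sub, mul_smul_comm]
    push_cast
    module
  simpa only [Complex.coe_smul, hhalf] using hasDerivAt_exp_add_smul_of_lie_sq_eq_zero hCA hCD hC2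
end

section
/- Let R be an associative unital algebra over ℚ (so that 2 is invertible), let U ∈ R be a unit with inverse U⁻¹, and let A, B ∈ R satisfy the double-commutator conditions [[U,B],U⁻¹] = 0 and [[U⁻¹,A],U] = 0, where [X,Y] := XY − YX. Then B = ½(UA + AU) if and only if A = ½(U⁻¹B + BU⁻¹). -/
/-!
With `v = u⁻¹`, expanding the symmetrized products gives
`v (u a + a u) + (u a + a u) v = 4 a + [[v, a], u]`, so when the double commutator vanishes,
applying `X ↦ ½ (v X + X v)` to `½ (u a + a u)` returns `a`. The two directions of the
equivalence are this fact for the pairs `(U, U⁻¹)` and `(U⁻¹, U)`.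
-/

theorem anticomm_anticomm_eq_four_mul_add_comm_comm {R : Type*} [Ring R] {u v : R}
    (huv : u * v = 1) (hvu : v * u = 1) (a : R) :
    v * (u * a + a * u) + (u * a + a * u) * v =
      4 * a + ((v * a - a * v) * u - u * (v * a - a * v)) := by
  have expand : v * (u * a + a * u) + (u * a + a * u) * v =
      (v * u) * a + a * (u * v) + v * a * u + u * a * v := by noncomm_ring
  have expand' : 4 * a + ((v * a - a * v) * u - u * (v * a - a * v)) =
      4 * a - a * (v * u) - (u * v) * a + v * a * u + u * a * v := by noncomm_ring
  rw [expand, expand', huv, hvu]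
  noncomm_ring

theorem eq_half_smul_anticomm_of_eq_half_smul_anticomm {R : Type*} [Ring R] [Algebra ℚ R]
    {u v a b : R} (huv : u * v = 1) (hvu : v * u = 1)
    (hcomm : (v * a - a * v) * u - u * (v * a - a * v) = 0)
    (hb : b = (2⁻¹ : ℚ) • (u * a + a * u)) :
    a = (2⁻¹ : ℚ) • (v * b + b * v) := by
  rw [hb, mul_smul_comm, smul_mul_assoc, ← smul_add,
    anticomm_anticomm_eq_four_mul_add_comm_comm huv hvu, hcomm, add_zero,
    show (4 : R) * a = (4 : ℚ) • a by rw [Algebra.smul_def, map_ofNat], smul_smul, smul_smul]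
  norm_num

/-- Switch-basis equivalence Eq. (eq:switch_basis): in an associative unital
ℚ-algebra, if `U` is a unit and the double commutators `[[U,B],U⁻¹]` and
`[[U⁻¹,A],U]` vanish, then `B = ½(UA + AU)` iff `A = ½(U⁻¹B + BU⁻¹)`. -/
theorem switch_basis_equivalence
    (R : Type*) [Ring R] [Algebra ℚ R]
    (U : Rˣ) (A B : R)
    (h1 : ((U : R) * B - B * U) * (↑U⁻¹ : R) - (↑U⁻¹ : R) * ((U : R) * B - B * U) = 0)
    (h2 : ((↑U⁻¹ : R) * A - A * (↑U⁻¹ : R)) * U - (U : R) * ((↑U⁻¹ : R) * A - A * (↑U⁻¹ : R)) = 0) :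
    B = (2⁻¹ : ℚ) • ((U : R) * A + A * U) ↔
      A = (2⁻¹ : ℚ) • ((↑U⁻¹ : R) * B + B * (↑U⁻¹ : R)) :=
  ⟨eq_half_smul_anticomm_of_eq_half_smul_anticomm U.mul_inv U.inv_mul h2,
    eq_half_smul_anticomm_of_eq_half_smul_anticomm U.inv_mul U.mul_inv h1⟩
end

section
/- Let E be a complex Hilbert space with inner product ⟨·,·⟩ conjugate-linear in the first argument, let P be the orthogonal projection onto a closed subspace of E, and let n, h ∈ E satisfy Pn = Ph = 0, n ≠ 0, and ⟨n, h⟩ ∈ ℝ. Set K := h − (⟨n,h⟩/‖n‖²)·n and assume K ≠ 0. Then for every Δu ∈ E, (Im⟨Δu, n⟩)²/‖n‖² + (Im⟨Δu, K⟩)²/‖K‖² ≤ ‖Δu − PΔu‖², and equality holds if and only if there exist real numbers C_K and C_N such that Δu − PΔu = i·(C_K·K + C_N·n). -/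
/-!
`K` is the Gram–Schmidt correction of `h` against `n`, so `⟪n, K⟫ = 0` and `i • n`, `i • K` are
orthogonal for the real inner product `Re ⟪·, ·⟫`; moreover `Im ⟪v, x⟫ = -Re ⟪i • x, v⟫`. Since `n`
and `K` lie in the range of `1 - P`, the left-hand side is the Bessel sum of `v = Δu - P Δu` for this
orthogonal pair in the underlying real Hilbert space, and equality in Bessel's inequality holds
exactly when `v` lies in their real span.
-/

open scoped InnerProductSpace
open Finset Complex

section Real
variable {F ι : Type*} [NormedAddCommGroup F] [InnerProductSpace ℝ F] [Fintype ι] {e : ι → F}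

theorem inner_sum_smul_of_pairwise_inner_eq_zero (he : Pairwise fun i j ↦ ⟪e i, e j⟫_ℝ = 0)
    (c : ι → ℝ) (j : ι) : ⟪e j, ∑ i, c i • e i⟫_ℝ = c j * ‖e j‖ ^ 2 := by
  rw [inner_sum, sum_eq_single j (fun i _ hij ↦ by rw [inner_smul_right, he hij.symm, mul_zero])
    (by simp), inner_smul_right, real_inner_self_eq_norm_sq]

theorem norm_sq_eq_sum_inner_sq_div_add_norm_sq_sub (he : Pairwise fun i j ↦ ⟪e i, e j⟫_ℝ = 0)
    (he0 : ∀ i, e i ≠ 0) (v : F) :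
    ‖v‖ ^ 2 = ∑ i, ⟪e i, v⟫_ℝ ^ 2 / ‖e i‖ ^ 2 +
      ‖v - ∑ i, (⟪e i, v⟫_ℝ / ‖e i‖ ^ 2) • e i‖ ^ 2 := by
  obtain ⟨p, hpdef⟩ : ∃ p, p = ∑ i, (⟪e i, v⟫_ℝ / ‖e i‖ ^ 2) • e i := ⟨_, rfl⟩
  have hp : ∀ j, ⟪e j, p⟫_ℝ = ⟪e j, v⟫_ℝ := fun j ↦ by
    rw [hpdef, inner_sum_smul_of_pairwise_inner_eq_zero he,
      div_mul_cancel₀ _ (by simpa using he0 j)]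
  have hpw : ∀ w, ⟪p, w⟫_ℝ = ∑ i, (⟪e i, v⟫_ℝ / ‖e i‖ ^ 2) * ⟪e i, w⟫_ℝ := fun w ↦ by
    simp only [hpdef, sum_inner, real_inner_smul_left]
  have hpp : ‖p‖ ^ 2 = ∑ i, ⟪e i, v⟫_ℝ ^ 2 / ‖e i‖ ^ 2 := by
    rw [← real_inner_self_eq_norm_sq, hpw]
    exact sum_congr rfl fun i _ ↦ by rw [hp]; ring
  have hperp : ⟪p, v - p⟫_ℝ = 0 := by
    simp only [hpw, inner_sub_right, hp, sub_self, mul_zero, sum_const_zero]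
  rw [← hpdef, ← hpp]
  calc ‖v‖ ^ 2 = ‖p + (v - p)‖ ^ 2 := by rw [add_sub_cancel]
    _ = ‖p‖ ^ 2 + ‖v - p‖ ^ 2 := by rw [norm_add_sq_real, hperp]; ring

theorem sum_inner_sq_div_norm_sq_le_norm_sq (he : Pairwise fun i j ↦ ⟪e i, e j⟫_ℝ = 0)
    (he0 : ∀ i, e i ≠ 0) (v : F) : ∑ i, ⟪e i, v⟫_ℝ ^ 2 / ‖e i‖ ^ 2 ≤ ‖v‖ ^ 2 := by
  rw [norm_sq_eq_sum_inner_sq_div_add_norm_sq_sub he he0 v]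
  exact le_add_of_nonneg_right (sq_nonneg _)

theorem sum_inner_sq_div_norm_sq_eq_norm_sq_iff (he : Pairwise fun i j ↦ ⟪e i, e j⟫_ℝ = 0)
    (he0 : ∀ i, e i ≠ 0) (v : F) :
    ∑ i, ⟪e i, v⟫_ℝ ^ 2 / ‖e i‖ ^ 2 = ‖v‖ ^ 2 ↔ ∃ c : ι → ℝ, v = ∑ i, c i • e i := by
  conv_lhs => rw [norm_sq_eq_sum_inner_sq_div_add_norm_sq_sub he he0 v, left_eq_add,
    sq_eq_zero_iff, norm_eq_zero, sub_eq_zero]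
  refine ⟨fun h ↦ ⟨_, h⟩, ?_⟩
  rintro ⟨c, rfl⟩
  congr! with i
  rw [inner_sum_smul_of_pairwise_inner_eq_zero he, mul_div_cancel_right₀ _ (by simpa using he0 i)]

end Real

section Complex
variable {E : Type*} [NormedAddCommGroup E] [InnerProductSpace ℂ E]
attribute [local instance] InnerProductSpace.complexToReal

theorem real_inner_I_smul_left (x v : E) : ⟪I • x, v⟫_ℝ = (⟪x, v⟫_ℂ).im := by
  rw [real_inner_eq_re_inner, inner_smul_left]; simp

theorem real_inner_I_smul_I_smul (x y : E) : ⟪I • x, I • y⟫_ℝ = (⟪x, y⟫_ℂ).re := by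
  rw [real_inner_eq_re_inner, inner_smul_left, inner_smul_right]; simp [← mul_assoc]

theorem im_inner_sq_eq_real_inner_I_smul_sq (v x : E) : (⟪v, x⟫_ℂ).im ^ 2 = ⟪I • x, v⟫_ℝ ^ 2 := by
  rw [real_inner_I_smul_left, ← inner_conj_symm, conj_im, neg_sq]

theorem im_inner_sq_div_add_le_norm_sq_and_eq_iff {x y : E} (hx : x ≠ 0) (hy : y ≠ 0)
    (hxy : ⟪x, y⟫_ℂ = 0) (v : E) :
    (⟪v, x⟫_ℂ).im ^ 2 / ‖x‖ ^ 2 + (⟪v, y⟫_ℂ).im ^ 2 / ‖y‖ ^ 2 ≤ ‖v‖ ^ 2 ∧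
      ((⟪v, x⟫_ℂ).im ^ 2 / ‖x‖ ^ 2 + (⟪v, y⟫_ℂ).im ^ 2 / ‖y‖ ^ 2 = ‖v‖ ^ 2 ↔
        ∃ a b : ℝ, v = I • ((a : ℂ) • y + (b : ℂ) • x)) := by
  set e : Fin 2 → E := ![I • y, I • x]
  have he : Pairwise fun i j ↦ ⟪e i, e j⟫_ℝ = 0 := by
    have hyx : ⟪y, x⟫_ℂ = 0 := inner_eq_zero_symm.mp hxy
    intro i j hij
    fin_cases i <;> fin_cases j <;> simp_all [e, real_inner_I_smul_I_smul]
  have he0 : ∀ i, e i ≠ 0 := by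
    intro i; fin_cases i <;> simp [e, hx, hy]
  have hsum : ∑ i, ⟪e i, v⟫_ℝ ^ 2 / ‖e i‖ ^ 2 =
      (⟪v, x⟫_ℂ).im ^ 2 / ‖x‖ ^ 2 + (⟪v, y⟫_ℂ).im ^ 2 / ‖y‖ ^ 2 := by
    simp [e, Fin.sum_univ_two, im_inner_sq_eq_real_inner_I_smul_sq, norm_smul, add_comm]
  have hspan : (∃ c : Fin 2 → ℝ, v = ∑ i, c i • e i) ↔
      ∃ a b : ℝ, v = I • ((a : ℂ) • y + (b : ℂ) • x) := by
    have hcomb : ∀ a b : ℝ, I • ((a : ℂ) • y + (b : ℂ) • x) = ∑ i, ![a, b] i • e i := by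
      intro a b
      simp only [Fin.sum_univ_two, e, Matrix.cons_val_zero, Matrix.cons_val_one, Complex.coe_smul]
      module
    simp only [hcomb, Fin.exists_fin_succ_pi, Fin.exists_fin_zero_pi]
    -- the two sides differ only by the unfolding `![a, b] = Fin.cons a (Fin.cons b finZeroElim)`
    exact Iff.rfl
  rw [← hsum, ← hspan]
  exact ⟨sum_inner_sq_div_norm_sq_le_norm_sq he he0 v,
    sum_inner_sq_div_norm_sq_eq_norm_sq_iff he he0 v⟩

end Complex

theorem inner_sub_inner_div_norm_sq_smul_eq_zero {𝕜 E : Type*} [RCLike 𝕜] [NormedAddCommGroup E]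
    [InnerProductSpace 𝕜 E] (x y : E) : ⟪x, y - (⟪x, y⟫_𝕜 / (‖x‖ : 𝕜) ^ 2) • x⟫_𝕜 = 0 := by
  rcases eq_or_ne x 0 with rfl | hx
  · simp
  · rw [inner_sub_right, inner_smul_right, inner_self_eq_norm_sq_to_K,
      div_mul_cancel₀ _ (by simpa using hx), sub_self]

theorem phase_orbit_inequality_general
    (E : Type*) [NormedAddCommGroup E] [InnerProductSpace ℂ E]
    (K : Submodule ℂ E)
    (P : E →ₗ[ℂ] E)
    (hP : ∀ x : E, P x ∈ K ∧ x - P x ∈ Kᗮ)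
    (n h : E) (hPn : P n = 0) (hPh : P h = 0) (hn : n ≠ 0)
    (K' : E) (hK' : K' = h - ((inner ℂ n h : ℂ) / ((‖n‖ : ℂ) ^ 2)) • n)
    (hK'ne : K' ≠ 0) :
    ∀ Δu : E,
      ((inner ℂ Δu n : ℂ).im) ^ 2 / ‖n‖ ^ 2 + ((inner ℂ Δu K' : ℂ).im) ^ 2 / ‖K'‖ ^ 2 ≤
        ‖Δu - P Δu‖ ^ 2 ∧
      (((inner ℂ Δu n : ℂ).im) ^ 2 / ‖n‖ ^ 2 + ((inner ℂ Δu K' : ℂ).im) ^ 2 / ‖K'‖ ^ 2 =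
          ‖Δu - P Δu‖ ^ 2 ↔
        ∃ CK CN : ℝ, Δu - P Δu =
          Complex.I • ((CK : ℂ) • K' + (CN : ℂ) • n)) := by
  intro Δu
  have mem_orthogonal_of_P_eq_zero : ∀ x, P x = 0 → x ∈ Kᗮ := fun x hx ↦ by
    simpa [hx] using (hP x).2
  have hnK : n ∈ Kᗮ := mem_orthogonal_of_P_eq_zero n hPn
  have hK'K : K' ∈ Kᗮ :=
    hK' ▸ Kᗮ.sub_mem (mem_orthogonal_of_P_eq_zero h hPh) (Kᗮ.smul_mem _ hnK)
  have inner_sub_P : ∀ x ∈ Kᗮ, ⟪Δu, x⟫_ℂ = ⟪Δu - P Δu, x⟫_ℂ := fun x hx ↦ by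
    rw [inner_sub_left, K.inner_right_of_mem_orthogonal (hP Δu).1 hx, sub_zero]
  rw [inner_sub_P n hnK, inner_sub_P K' hK'K]
  exact im_inner_sq_div_add_le_norm_sq_and_eq_iff hn hK'ne
    (hK' ▸ inner_sub_inner_div_norm_sq_smul_eq_zero n h) _

/-- Phase-orbit inequality `λ(φ,Δt) ≥ 0` of Sec. 7.4 with its equality
condition: with `P` the orthogonal projection onto a closed subspace,
`Pn = Ph = 0`, `n ≠ 0`, `⟨n,h⟩` real, and `K = h − (⟨n,h⟩/‖n‖²)·n ≠ 0`,
one has `(Im⟨Δu,n⟩)²/‖n‖² + (Im⟨Δu,K⟩)²/‖K‖² ≤ ‖Δu − PΔu‖²`, with equality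
iff `Δu − PΔu = i(C_K·K + C_N·n)` for some reals `C_K, C_N`. -/
theorem phase_orbit_inequality
    (E : Type*) [NormedAddCommGroup E] [InnerProductSpace ℂ E] [CompleteSpace E]
    (K : Submodule ℂ E) (hK : IsClosed (K : Set E))
    (P : E →ₗ[ℂ] E)
    (hP : ∀ x : E, P x ∈ K ∧ x - P x ∈ Kᗮ)
    (n h : E) (hPn : P n = 0) (hPh : P h = 0) (hn : n ≠ 0)
    (hreal : (inner ℂ n h : ℂ).im = 0)
    (K' : E) (hK' : K' = h - ((inner ℂ n h : ℂ) / ((‖n‖ : ℂ) ^ 2)) • n)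
    (hK'ne : K' ≠ 0) :
    ∀ Δu : E,
      ((inner ℂ Δu n : ℂ).im) ^ 2 / ‖n‖ ^ 2 + ((inner ℂ Δu K' : ℂ).im) ^ 2 / ‖K'‖ ^ 2 ≤
        ‖Δu - P Δu‖ ^ 2 ∧
      (((inner ℂ Δu n : ℂ).im) ^ 2 / ‖n‖ ^ 2 + ((inner ℂ Δu K' : ℂ).im) ^ 2 / ‖K'‖ ^ 2 =
          ‖Δu - P Δu‖ ^ 2 ↔
        ∃ CK CN : ℝ, Δu - P Δu =
          Complex.I • ((CK : ℂ) • K' + (CN : ℂ) • n)) :=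
  phase_orbit_inequality_general E K P hP n h hPn hPh hn K' hK' hK'ne
end

section
/- Let b be a positive natural number and let F, G : ℂ^b → ℂ be entire functions (analytic on all of ℂ^b) such that for every positive integer k, ∫_{ℂ^b} |F(z)|²·exp(−‖z‖²/k²) dz < ∞ and ∫_{ℂ^b} |G(z)|²·exp(−‖z‖²/k²) dz < ∞, the integrals being with respect to Lebesgue measure on ℂ^b ≅ ℝ^{2b} and ‖z‖² := ∑ᵢ |zᵢ|². Then for every positive integer k, ∫_{ℂ^b} |F(z)·G(z)|²·exp(−‖z‖²/k²) dz < ∞. -/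
/-!
An entire function `h` on `ℂⁿ` has the sub-mean value property on polydiscs,
`(π r²)ⁿ ‖h z‖ ≤ ∫_{polydisc(z, r)} ‖h‖`: the mean value property on circles, integrated in polar
coordinates, gives it on discs, and Fubini extends it one coordinate at a time. (For the sup norm
of `Fin n → ℂ`, `Metric.ball z r` is exactly the polydisc.) Applied to `h = F²` on the unit
polydisc around `z`, where the weight `exp (-‖w‖² / t²)` is at least `exp (-(2‖z‖² + 2n) / t²)`,
integrability of `|F|² exp (-‖w‖² / t²)` yields the growth bound `‖F z‖² ≤ A exp (2‖z‖² / t²)`.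
With `t = 2k` this makes `|F G|² exp (-‖z‖² / k²)` dominated by `A |G|² exp (-‖z‖² / (2k)²)`.
-/

open MeasureTheory Metric Set Real

theorem Complex.polarCoord_symm_eq_circleMap (p : ℝ × ℝ) :
    Complex.polarCoord.symm p = circleMap 0 p.1 p.2 := by
  simp [Complex.polarCoord_symm_apply, circleMap, Complex.exp_mul_I]

theorem Continuous.integrableOn_ball {X E : Type*} [MetricSpace X] [ProperSpace X]
    [MeasurableSpace X] [OpensMeasurableSpace X] [NormedAddCommGroup E] {μ : Measure X}
    [IsFiniteMeasureOnCompacts μ] {g : X → E} (hg : Continuous g) (x : X) (r : ℝ) :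
    IntegrableOn g (ball x r) μ :=
  (hg.continuousOn.integrableOn_compact (isCompact_closedBall x r)).mono_set ball_subset_closedBall

section AreaFormula

variable {E : Type*} [NormedAddCommGroup E] [NormedSpace ℝ E]

theorem integral_Ioo_circleMap_eq_circleAverage (g : ℂ → E) (c : ℂ) (r : ℝ) :
    ∫ θ in Ioo (-π) π, g (circleMap c r θ) = (2 * π) • circleAverage g c r := by
  rw [circleAverage_eq_integral_add (-π), smul_inv_smul₀ (by positivity),
    intervalIntegral.integral_comp_add_right (fun θ => g (circleMap c r θ)),
    intervalIntegral.integral_of_le (by linarith [pi_pos]), integral_Ioc_eq_integral_Ioo]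
  ring_nf

theorem setIntegral_ball_eq_setIntegral_polar (g : ℂ → E) (c : ℂ) (R : ℝ) :
    ∫ w in ball c R, g w = ∫ p in Ioo 0 R ×ˢ Ioo (-π) π, p.1 • g (circleMap c p.1 p.2) := by
  have hpolar := Complex.integral_comp_polarCoord_symm fun w => (ball c R).indicator g (c + w)
  rw [integral_add_left_eq_self (fun w => (ball c R).indicator g w),
    integral_indicator measurableSet_ball, polarCoord_target] at hpolar
  have hmem : ∀ p ∈ Ioi (0 : ℝ) ×ˢ Ioo (-π) π,
      c + Complex.polarCoord.symm p ∈ ball c R ↔ p.1 < R := by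
    rintro ⟨r, θ⟩ ⟨hr, -⟩
    simp [abs_of_pos (show 0 < r from hr)]
  rw [← hpolar, setIntegral_eq_of_subset_of_forall_sdiff_eq_zero
    (measurableSet_Ioi.prod measurableSet_Ioo) (prod_mono Ioo_subset_Ioi_self subset_rfl)]
  · refine setIntegral_congr_fun (measurableSet_Ioo.prod measurableSet_Ioo) fun p hp => ?_
    rw [indicator_of_mem ((hmem p ⟨hp.1.1, hp.2⟩).2 hp.1.2), Complex.polarCoord_symm_eq_circleMap,
      circleMap, circleMap, zero_add]
  · rintro p ⟨hp, hpR⟩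
    rw [indicator_of_notMem fun h => hpR ⟨⟨hp.1, (hmem p hp).1 h⟩, hp.2⟩, smul_zero]

theorem Continuous.setIntegral_ball_eq_intervalIntegral_circleAverage {g : ℂ → E}
    (hg : Continuous g) (c : ℂ) {R : ℝ} (hR : 0 ≤ R) :
    ∫ w in ball c R, g w = ∫ r in 0..R, (2 * π * r) • circleAverage g c r := by
  have hint : IntegrableOn (fun p : ℝ × ℝ => p.1 • g (circleMap c p.1 p.2))
      (Ioo 0 R ×ˢ Ioo (-π) π) (volume.prod volume) :=
    ((by fun_prop : Continuous fun p : ℝ × ℝ => p.1 • g (circleMap c p.1 p.2)).continuousOn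
      |>.integrableOn_compact (isCompact_Icc.prod isCompact_Icc)).mono_set
      (prod_mono Ioo_subset_Icc_self Ioo_subset_Icc_self)
  rw [setIntegral_ball_eq_setIntegral_polar, Measure.volume_eq_prod, setIntegral_prod _ hint,
    intervalIntegral.integral_of_le hR, integral_Ioc_eq_integral_Ioo]
  refine setIntegral_congr_fun measurableSet_Ioo fun r _ => ?_
  rw [integral_smul, integral_Ioo_circleMap_eq_circleAverage, smul_smul, mul_comm]

theorem preimage_piFinSuccAbove_zero_ball {n : ℕ} (z : Fin (n + 1) → ℂ) {r : ℝ} (hr : 0 < r) :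
    MeasurableEquiv.piFinSuccAbove (fun _ => ℂ) 0 ⁻¹' ball (z 0, Fin.tail z) r = ball z r := by
  ext w
  simp [← ball_prod_same, ball_pi _ hr, Fin.forall_fin_succ, Fin.tail]

theorem Continuous.setIntegral_ball_fin_succ {n : ℕ} {g : (Fin (n + 1) → ℂ) → E}
    (hg : Continuous g) (z : Fin (n + 1) → ℂ) {r : ℝ} (hr : 0 < r) :
    ∫ w in ball z r, g w =
      ∫ x in ball (z 0) r, ∫ y in ball (Fin.tail z) r, g (Fin.cons x y) := by
  have hmp : MeasurePreserving (MeasurableEquiv.piFinSuccAbove (fun _ : Fin (n + 1) => ℂ) 0)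
      volume (volume.prod volume) := measurePreserving_piFinSuccAbove (fun _ => volume) 0
  have hint : IntegrableOn (fun p : ℂ × (Fin n → ℂ) => g (Fin.cons p.1 p.2))
      (ball (z 0) r ×ˢ ball (Fin.tail z) r) (volume.prod volume) := by
    rw [ball_prod_same]
    exact (hg.comp (Fin.consEquivL ℂ (fun _ : Fin (n + 1) => ℂ)).continuous).integrableOn_ball _ _
  rw [← setIntegral_prod _ hint, ball_prod_same, ← preimage_piFinSuccAbove_zero_ball z hr,
    ← hmp.setIntegral_preimage_emb (MeasurableEquiv.piFinSuccAbove _ 0).measurableEmbedding]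
  simp

end AreaFormula

section SubMeanValue

variable {E : Type*} [NormedAddCommGroup E] [NormedSpace ℂ E] [CompleteSpace E]

theorem Differentiable.norm_le_circleAverage_norm {f : ℂ → E} (hf : Differentiable ℂ f)
    (c : ℂ) (r : ℝ) : ‖f c‖ ≤ circleAverage (fun w => ‖f w‖) c r := by
  rw [← hf.diffContOnCl.circleAverage (R := r), circleAverage_def, circleAverage_def, norm_smul,
    Real.norm_of_nonneg (by positivity), smul_eq_mul]
  gcongr
  exact intervalIntegral.norm_integral_le_integral_norm (by positivity)

theorem Differentiable.pi_mul_sq_mul_norm_le_setIntegral_ball {f : ℂ → E}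
    (hf : Differentiable ℂ f) (c : ℂ) {R : ℝ} (hR : 0 ≤ R) :
    π * R ^ 2 * ‖f c‖ ≤ ∫ w in ball c R, ‖f w‖ := by
  have hcont : Continuous fun w => ‖f w‖ := hf.continuous.norm
  rw [hcont.setIntegral_ball_eq_intervalIntegral_circleAverage c hR]
  calc π * R ^ 2 * ‖f c‖ = ∫ r in 0..R, (2 * π * r) • ‖f c‖ := by
        rw [intervalIntegral.integral_smul_const, intervalIntegral.integral_const_mul, integral_id,
          smul_eq_mul]
        ring
    _ ≤ ∫ r in 0..R, (2 * π * r) • circleAverage (fun w => ‖f w‖) c r := by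
        refine intervalIntegral.integral_mono_on hR
          (Continuous.intervalIntegrable (by fun_prop) _ _)
          (Continuous.intervalIntegrable (by fun_prop) _ _) fun r hr => ?_
        have : 0 ≤ 2 * π * r := by have := hr.1; positivity
        exact smul_le_smul_of_nonneg_left (hf.norm_le_circleAverage_norm c r) this

theorem Differentiable.pi_mul_sq_pow_mul_norm_le_setIntegral_ball {n : ℕ}
    {h : (Fin n → ℂ) → E} (hh : Differentiable ℂ h) (z : Fin n → ℂ) {r : ℝ} (hr : 0 < r) :
    (π * r ^ 2) ^ n * ‖h z‖ ≤ ∫ w in ball z r, ‖h w‖ := by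
  induction n with
  | zero =>
    rw [eq_univ_of_forall fun w => (Subsingleton.elim z w ▸ mem_ball_self hr : w ∈ ball z r)]
    simp [Subsingleton.elim _ z, measureReal_def, volume_pi]
  | succ n ih =>
    have hcons : Differentiable ℂ fun p : ℂ × (Fin n → ℂ) => h (Fin.cons p.1 p.2) :=
      hh.comp (Fin.consEquivL ℂ (fun _ : Fin (n + 1) => ℂ)).differentiable
    have hfirst : Differentiable ℂ fun x => h (Fin.cons x (Fin.tail z)) :=
      hcons.comp (differentiable_id.prodMk (differentiable_const _))
    have hslices : IntegrableOn (fun x => ∫ y in ball (Fin.tail z) r, ‖h (Fin.cons x y)‖)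
        (ball (z 0) r) := by
      have hint := hcons.continuous.norm.integrableOn_ball (μ := volume.prod volume)
        (z 0, Fin.tail z) r
      rw [← ball_prod_same, IntegrableOn, ← Measure.prod_restrict] at hint
      exact hint.integral_prod_left
    calc (π * r ^ 2) ^ (n + 1) * ‖h z‖
        = (π * r ^ 2) ^ n * (π * r ^ 2 * ‖h (Fin.cons (z 0) (Fin.tail z))‖) := by
          rw [Fin.cons_self_tail]; ring
      _ ≤ (π * r ^ 2) ^ n * ∫ x in ball (z 0) r, ‖h (Fin.cons x (Fin.tail z))‖ := by
          gcongr
          exact hfirst.pi_mul_sq_mul_norm_le_setIntegral_ball _ hr.le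
      _ = ∫ x in ball (z 0) r, (π * r ^ 2) ^ n * ‖h (Fin.cons x (Fin.tail z))‖ :=
          (integral_const_mul _ _).symm
      _ ≤ ∫ x in ball (z 0) r, ∫ y in ball (Fin.tail z) r, ‖h (Fin.cons x y)‖ := by
          refine setIntegral_mono_on ?_ hslices measurableSet_ball fun x _ => ?_
          · exact (continuous_const.mul hfirst.continuous.norm).integrableOn_ball _ _
          · exact ih (hcons.comp ((differentiable_const _).prodMk differentiable_id)) _
      _ = ∫ w in ball z r, ‖h w‖ := (hh.continuous.norm.setIntegral_ball_fin_succ z hr).symm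

end SubMeanValue

theorem sum_norm_sq_le_of_mem_ball_one {n : ℕ} {w z : Fin n → ℂ} (hw : w ∈ ball z 1) :
    ∑ i, ‖w i‖ ^ 2 ≤ 2 * ∑ i, ‖z i‖ ^ 2 + 2 * n := by
  have hcoord : ∀ i, ‖w i‖ ^ 2 ≤ 2 * ‖z i‖ ^ 2 + 2 := fun i => by
    have hdist : ‖w i - z i‖ < 1 := by
      simpa [dist_eq_norm] using (dist_pi_lt_iff one_pos).1 (mem_ball.1 hw) i
    have hle : ‖w i‖ ≤ ‖z i‖ + 1 := by linarith [norm_le_insert' (w i) (z i)]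
    nlinarith [mul_self_le_mul_self (norm_nonneg _) hle, sq_nonneg (‖z i‖ - 1)]
  calc ∑ i, ‖w i‖ ^ 2 ≤ ∑ i : Fin n, (2 * ‖z i‖ ^ 2 + 2) := Finset.sum_le_sum fun i _ => hcoord i
    _ = 2 * ∑ i, ‖z i‖ ^ 2 + 2 * n := by
        rw [Finset.sum_add_distrib, ← Finset.mul_sum, Finset.sum_const, Finset.card_univ,
          Fintype.card_fin, nsmul_eq_mul, mul_comm (n : ℝ)]

theorem Differentiable.pi_pow_mul_sq_norm_le_of_integrable_gaussian {n : ℕ}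
    {F : (Fin n → ℂ) → ℂ} (hF : Differentiable ℂ F) {t : ℝ}
    (hint : Integrable fun w : Fin n → ℂ => ‖F w‖ ^ 2 * Real.exp (-(∑ i, ‖w i‖ ^ 2) / t ^ 2))
    (z : Fin n → ℂ) :
    π ^ n * ‖F z‖ ^ 2 ≤ Real.exp ((2 * ∑ i, ‖z i‖ ^ 2 + 2 * (n : ℝ)) / t ^ 2) *
      ∫ w, ‖F w‖ ^ 2 * Real.exp (-(∑ i, ‖w i‖ ^ 2) / t ^ 2) := by
  set K := Real.exp ((2 * ∑ i, ‖z i‖ ^ 2 + 2 * (n : ℝ)) / t ^ 2)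
  have hweight : ∀ w ∈ ball z 1, 1 ≤ K * Real.exp (-(∑ i, ‖w i‖ ^ 2) / t ^ 2) := fun w hw => by
    rw [← Real.exp_add, ← add_div]
    have hsum := sum_norm_sq_le_of_mem_ball_one hw
    exact Real.one_le_exp (div_nonneg (by linarith) (sq_nonneg t))
  calc π ^ n * ‖F z‖ ^ 2 = (π * 1 ^ 2) ^ n * ‖F z * F z‖ := by rw [norm_mul]; ring
    _ ≤ ∫ w in ball z 1, ‖F w * F w‖ :=
        (hF.mul hF).pi_mul_sq_pow_mul_norm_le_setIntegral_ball z one_pos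
    _ ≤ ∫ w in ball z 1, K * (‖F w‖ ^ 2 * Real.exp (-(∑ i, ‖w i‖ ^ 2) / t ^ 2)) := by
        refine setIntegral_mono_on ((hF.mul hF).continuous.norm.integrableOn_ball z 1)
          (hint.const_mul K).integrableOn measurableSet_ball fun w hw => ?_
        calc ‖F w * F w‖ = ‖F w‖ ^ 2 * 1 := by rw [norm_mul]; ring
          _ ≤ ‖F w‖ ^ 2 * (K * Real.exp (-(∑ i, ‖w i‖ ^ 2) / t ^ 2)) := by
              gcongr; exact hweight w hw
          _ = _ := by ring
    _ ≤ K * ∫ w, ‖F w‖ ^ 2 * Real.exp (-(∑ i, ‖w i‖ ^ 2) / t ^ 2) := by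
        rw [integral_const_mul]
        exact mul_le_mul_of_nonneg_left
          (setIntegral_le_integral hint (ae_of_all _ fun w => by positivity)) (Real.exp_pos _).le

theorem Differentiable.exists_sq_norm_le_mul_exp_of_integrable_gaussian {n : ℕ}
    {F : (Fin n → ℂ) → ℂ} (hF : Differentiable ℂ F) {t : ℝ}
    (hint : Integrable fun w : Fin n → ℂ => ‖F w‖ ^ 2 * Real.exp (-(∑ i, ‖w i‖ ^ 2) / t ^ 2)) :
    ∃ A, ∀ z : Fin n → ℂ, ‖F z‖ ^ 2 ≤ A * Real.exp (2 * (∑ i, ‖z i‖ ^ 2) / t ^ 2) := by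
  refine ⟨(π ^ n)⁻¹ * Real.exp (2 * n / t ^ 2) *
    ∫ w, ‖F w‖ ^ 2 * Real.exp (-(∑ i, ‖w i‖ ^ 2) / t ^ 2), fun z => ?_⟩
  calc ‖F z‖ ^ 2 = (π ^ n)⁻¹ * (π ^ n * ‖F z‖ ^ 2) := by field_simp
    _ ≤ (π ^ n)⁻¹ * (Real.exp ((2 * ∑ i, ‖z i‖ ^ 2 + 2 * (n : ℝ)) / t ^ 2) *
          ∫ w, ‖F w‖ ^ 2 * Real.exp (-(∑ i, ‖w i‖ ^ 2) / t ^ 2)) := by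
        exact mul_le_mul_of_nonneg_left
          (hF.pi_pow_mul_sq_norm_le_of_integrable_gaussian hint z) (by positivity)
    _ = _ := by rw [add_div, Real.exp_add]; ring

theorem segal_bargmann_psi_product_closure_general
    (b : ℕ)
    (F G : (Fin b → ℂ) → ℂ)
    (hF : ∀ x : Fin b → ℂ, AnalyticAt ℂ F x)
    (hG : ∀ x : Fin b → ℂ, AnalyticAt ℂ G x)
    (hFint : ∀ k : ℕ, 0 < k →
      Integrable (fun z : Fin b → ℂ =>
        ‖F z‖ ^ 2 * Real.exp (-(∑ i, ‖z i‖ ^ 2) / (k : ℝ) ^ 2)))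
    (hGint : ∀ k : ℕ, 0 < k →
      Integrable (fun z : Fin b → ℂ =>
        ‖G z‖ ^ 2 * Real.exp (-(∑ i, ‖z i‖ ^ 2) / (k : ℝ) ^ 2))) :
    ∀ k : ℕ, 0 < k →
      Integrable (fun z : Fin b → ℂ =>
        ‖F z * G z‖ ^ 2 * Real.exp (-(∑ i, ‖z i‖ ^ 2) / (k : ℝ) ^ 2)) := by
  intro k hk
  have hFd : Differentiable ℂ F := fun x => (hF x).differentiableAt
  have hFc : Continuous F := hFd.continuous
  have hGc : Continuous G := continuous_iff_continuousAt.2 fun x => (hG x).continuousAt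
  obtain ⟨A, hA⟩ := hFd.exists_sq_norm_le_mul_exp_of_integrable_gaussian (hFint (2 * k) (by omega))
  have hA0 : 0 ≤ A := nonneg_of_mul_nonneg_left ((sq_nonneg _).trans (hA 0)) (Real.exp_pos _)
  refine ((hGint (2 * k) (by omega)).const_mul A).mono'
    (Continuous.aestronglyMeasurable (by fun_prop)) (ae_of_all _ fun z => ?_)
  set s := ∑ i, ‖z i‖ ^ 2
  have hexp : 2 * s / ((2 * k : ℕ) : ℝ) ^ 2 + -s / (k : ℝ) ^ 2 ≤ -s / ((2 * k : ℕ) : ℝ) ^ 2 := by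
    have hs : 0 ≤ s := by positivity
    push_cast
    field_simp
    linarith
  rw [Real.norm_of_nonneg (by positivity), norm_mul, mul_pow]
  calc ‖F z‖ ^ 2 * ‖G z‖ ^ 2 * Real.exp (-s / (k : ℝ) ^ 2)
      ≤ A * Real.exp (2 * s / ((2 * k : ℕ) : ℝ) ^ 2) * ‖G z‖ ^ 2 * Real.exp (-s / (k : ℝ) ^ 2) := by
        gcongr; exact hA z
    _ = A * (‖G z‖ ^ 2 * Real.exp (2 * s / ((2 * k : ℕ) : ℝ) ^ 2 + -s / (k : ℝ) ^ 2)) := by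
        rw [Real.exp_add]; ring
    _ ≤ A * (‖G z‖ ^ 2 * Real.exp (-s / ((2 * k : ℕ) : ℝ) ^ 2)) := by gcongr

/-- Closure of the boson space `F_ψ` under the ψ product (Appendix C): if the
entire functions `F, G` on `ℂ^b` satisfy `∫|F|²e^{−‖z‖²/k²} < ∞` and
`∫|G|²e^{−‖z‖²/k²} < ∞` for every positive integer `k`, then so does their
pointwise product `F·G`. -/
theorem segal_bargmann_psi_product_closure
    (b : ℕ) (hb : 0 < b)
    (F G : (Fin b → ℂ) → ℂ)
    (hF : ∀ x : Fin b → ℂ, AnalyticAt ℂ F x)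
    (hG : ∀ x : Fin b → ℂ, AnalyticAt ℂ G x)
    (hFint : ∀ k : ℕ, 0 < k →
      Integrable (fun z : Fin b → ℂ =>
        ‖F z‖ ^ 2 * Real.exp (-(∑ i, ‖z i‖ ^ 2) / (k : ℝ) ^ 2)))
    (hGint : ∀ k : ℕ, 0 < k →
      Integrable (fun z : Fin b → ℂ =>
        ‖G z‖ ^ 2 * Real.exp (-(∑ i, ‖z i‖ ^ 2) / (k : ℝ) ^ 2))) :
    ∀ k : ℕ, 0 < k →
      Integrable (fun z : Fin b → ℂ =>
        ‖F z * G z‖ ^ 2 * Real.exp (-(∑ i, ‖z i‖ ^ 2) / (k : ℝ) ^ 2)) :=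
  segal_bargmann_psi_product_closure_general b F G hF hG hFint hGint
end

section
/- Let γ, α ∈ ℂ and define F : ℂ → ℂ by F(z) = exp(½·γ·z² + α·z). Then the following are equivalent: (i) for every positive integer k, ∫_ℂ |F(z)|²·exp(−|z|²/k²) dz < ∞ (Lebesgue measure on ℂ ≅ ℝ²); (ii) γ = 0. -/
open MeasureTheory Filter Topology

/-!
`|F(z)|² e^{-|z|²/k²}` is `exp (Re (γ z²) + 2 Re (α z) - |z|²/k²)`. For `γ = 0` this is a Gaussian
times a linear exponential, hence integrable. For `γ ≠ 0`, rotate `z` so that `γ` becomes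
`|γ| > 0`; as soon as `1/k² < |γ|`, the exponent grows like `(|γ| - 1/k²) x²` along the half-strip
`{x ≥ T, 0 ≤ y ≤ 1}`, so the integrand is at least `1` on a set of infinite measure.
-/

noncomputable def gaussExp (γ α : ℂ) (b : ℝ) (z : ℂ) : ℝ :=
  Real.exp ((γ * z ^ 2).re + (α * z).re - b * ‖z‖ ^ 2)

lemma norm_cexp_sq_mul_exp_eq_gaussExp (γ α : ℂ) (s : ℝ) (z : ℂ) :
    ‖Complex.exp (γ / 2 * z ^ 2 + α * z)‖ ^ 2 * Real.exp (-‖z‖ ^ 2 / s) =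
      gaussExp γ (2 * α) s⁻¹ z := by
  have hre : 2 * (γ / 2 * z ^ 2 + α * z).re = (γ * z ^ 2).re + (2 * α * z).re := by
    rw [← Complex.re_ofReal_mul, ← Complex.add_re]; push_cast; ring_nf
  rw [gaussExp, Complex.norm_exp, ← Real.exp_nat_mul, ← Real.exp_add, Nat.cast_ofNat, hre]
  ring_nf

lemma gaussExp_mul_left (γ α : ℂ) (b : ℝ) {u : ℂ} (hu : ‖u‖ = 1) (z : ℂ) :
    gaussExp γ α b (u * z) = gaussExp (γ * u ^ 2) (α * u) b z := by
  simp only [gaussExp, norm_mul, hu, one_mul]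
  ring_nf

lemma integrable_gaussExp_zero (α : ℂ) {b : ℝ} (hb : 0 < b) : Integrable (gaussExp 0 α b) := by
  have h := (GaussianFourier.integrable_cexp_neg_mul_sq_norm_add (V := ℂ)
    (b := b) (by simpa using hb) 1 (starRingEnd ℂ α)).norm
  refine h.congr (.of_forall fun z => ?_)
  beta_reduce
  rw [Complex.norm_exp, gaussExp, Complex.inner, Complex.conj_conj, one_mul, Complex.add_re,
    ← Complex.ofReal_pow, ← Complex.ofReal_neg, ← Complex.ofReal_mul, Complex.ofReal_re,
    zero_mul, Complex.zero_re, mul_comm z, Complex.ofReal_re]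
  congr 1
  ring

lemma volume_strip_eq_top (T : ℝ) :
    volume {z : ℂ | T ≤ z.re ∧ z.im ∈ Set.Icc 0 1} = ⊤ := by
  have hmeas : MeasurableSet (Set.Ici T ×ˢ Set.Icc (0 : ℝ) 1) :=
    measurableSet_Ici.prod measurableSet_Icc
  refine (Complex.volume_preserving_equiv_real_prod.measure_preimage
    hmeas.nullMeasurableSet).trans ?_
  rw [Measure.volume_eq_prod, Measure.prod_prod, Real.volume_Ici, Real.volume_Icc]
  simp

lemma exists_one_le_gaussExp_ofReal (α : ℂ) {b c : ℝ} (hbc : b < c) :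
    ∃ T, ∀ z : ℂ, T ≤ z.re ∧ z.im ∈ Set.Icc 0 1 → 1 ≤ gaussExp c α b z := by
  set a := ‖α‖
  set K := |c + b|
  -- on the strip the exponent is at least `(c - b) x² - a (x + 1) - K`
  refine ⟨max 1 ((2 * a + K) / (c - b)), fun z ⟨hT, hy0, hy1⟩ => ?_⟩
  set x := z.re
  set y := z.im
  have hx1 : 1 ≤ x := (le_max_left _ _).trans hT
  have hxT : 2 * a + K ≤ (c - b) * x := by
    rw [← div_le_iff₀' (sub_pos.2 hbc)]; exact (le_max_right _ _).trans hT
  have hnorm_sq : ‖z‖ ^ 2 = x ^ 2 + y ^ 2 := by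
    rw [Complex.sq_norm, Complex.normSq_apply]; ring
  have hnorm : ‖z‖ ≤ x + 1 := by
    calc ‖z‖ ≤ |x| + |y| := Complex.norm_le_abs_re_add_abs_im z
      _ ≤ x + 1 := by rw [abs_of_pos (by linarith), abs_of_nonneg hy0]; linarith
  have hlin : -(a * (x + 1)) ≤ (α * z).re := by
    have := (abs_le.mp (Complex.abs_re_le_norm (α * z))).1
    rw [norm_mul] at this
    nlinarith [norm_nonneg α]
  have hquad : ((c : ℂ) * z ^ 2).re = c * (x ^ 2 - y ^ 2) := by
    rw [Complex.mul_re, Complex.ofReal_re, Complex.ofReal_im, sq, Complex.mul_re]; ring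
  have hy2 : (c + b) * y ^ 2 ≤ K := by
    calc (c + b) * y ^ 2 ≤ |c + b| * y ^ 2 := by gcongr; exact le_abs_self _
      _ ≤ K * 1 := by gcongr; nlinarith
      _ = K := mul_one K
  rw [gaussExp, Real.one_le_exp_iff, hquad, hnorm_sq]
  nlinarith [abs_nonneg (c + b), norm_nonneg α]

lemma not_integrable_gaussExp_ofReal (α : ℂ) {b c : ℝ} (hbc : b < c) :
    ¬ Integrable (gaussExp c α b) := by
  intro h
  obtain ⟨T, hT⟩ := exists_one_le_gaussExp_ofReal α hbc
  have hsub : {z : ℂ | T ≤ z.re ∧ z.im ∈ Set.Icc 0 1} ⊆ {z | 1 ≤ ‖gaussExp c α b z‖} :=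
    fun z hz => (hT z hz).trans (Real.le_norm_self _)
  have := (measure_mono hsub).trans_lt (h.measure_norm_ge_lt_top one_pos)
  rw [volume_strip_eq_top] at this
  exact lt_irrefl _ this

lemma not_integrable_gaussExp (α : ℂ) {γ : ℂ} {b : ℝ} (hb : b < ‖γ‖) :
    ¬ Integrable (gaussExp γ α b) := by
  intro h
  set u := Circle.exp (-γ.arg / 2)
  have hrot : γ * (u : ℂ) ^ 2 = ‖γ‖ := by
    conv_lhs => rw [← Complex.norm_mul_exp_arg_mul_I γ]
    rw [Circle.coe_exp, ← Complex.exp_nat_mul, mul_assoc, ← Complex.exp_add]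
    push_cast
    ring_nf
    simp
  have hcomp : gaussExp ‖γ‖ (α * u) b = gaussExp γ α b ∘ rotation u := by
    funext z
    rw [Function.comp_apply, rotation_apply, gaussExp_mul_left _ _ _ (Circle.norm_coe u), hrot]
  apply not_integrable_gaussExp_ofReal (α * u) hb
  rw [hcomp]
  exact ((rotation u).measurePreserving.integrable_comp_emb
    (rotation u).toHomeomorph.measurableEmbedding).2 h

/-- Characterization from Appendix C of the Gaussian exponentials in the
Fréchet space `F_ψ = ∩_k H_k`: `F(z) = exp(½γz² + αz)` satisfies
`∫|F(z)|²e^{−|z|²/k²} < ∞` for every positive integer `k` iff `γ = 0`. -/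
theorem gaussian_exponential_in_Fpsi_iff
    (γ α : ℂ) :
    (∀ k : ℕ, 0 < k →
      Integrable (fun z : ℂ =>
        ‖Complex.exp (γ / 2 * z ^ 2 + α * z)‖ ^ 2 *
          Real.exp (-‖z‖ ^ 2 / (k : ℝ) ^ 2))) ↔ γ = 0 := by
  simp_rw [norm_cexp_sq_mul_exp_eq_gaussExp]
  constructor
  · intro h
    by_contra hγ
    have hweight : Tendsto (fun k : ℕ => ((k : ℝ) ^ 2)⁻¹) atTop (𝓝 0) :=
      tendsto_inv_atTop_zero.comp
        ((tendsto_pow_atTop two_ne_zero).comp tendsto_natCast_atTop_atTop)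
    obtain ⟨k, hk_small, hk_pos⟩ := ((hweight.eventually (gt_mem_nhds (norm_pos_iff.2 hγ))).and
      (eventually_gt_atTop 0)).exists
    exact not_integrable_gaussExp (2 * α) hk_small (h k hk_pos)
  · rintro rfl k hk
    exact integrable_gaussExp_zero (2 * α) (by positivity)
end
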